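/- arXiv:gr-qc/0306042 — 4 statements merged into one kernel-verified Lean document; each statement's English description precedes it below -/
import Mathlib

section
/- Let Σ be a 2-dimensional timelike submanifold with lightlike tangent vector fields l⁺, l⁻, g(l⁺,l⁻) = -2, such that ∇_{l⁺}l⁺ and ∇_{l⁻}l⁻ are tangent to Σ. Then the second fundamental form satisfies Π(u,w) = g(u,w)Z for all tangent fields u,w, where Z = -(1/2)P⊥(∇_{l⁺}l⁻); i.e., Σ is totally umbilic. -/
/-! Expanding bilinearly in the null frame `l⁺, l⁻`, the diagonal terms of both the second
fundamental form and the metric vanish, and the two mixed terms coincide; so `Π(u, w)` and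
`g(u, w)` are the same multiple `αδ + βγ` of `Π(l⁺, l⁻)` and of `g(l⁺, l⁻) = -2`. -/

theorem LinearMap.apply_smul_add_smul_of_diag_eq_zero {R M N : Type*} [CommSemiring R]
    [AddCommMonoid M] [AddCommMonoid N] [Module R M] [Module R N]
    (B : M →ₗ[R] M →ₗ[R] N) {a b : M} (ha : B a a = 0) (hb : B b b = 0)
    (hab : B a b = B b a) (α β γ δ : R) :
    B (α • a + β • b) (γ • a + δ • b) = (α * δ + β * γ) • B a b := by
  simp only [map_add, map_smul, LinearMap.add_apply, LinearMap.smul_apply, ha, hb, ← hab,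
    smul_zero, zero_add, add_zero, smul_smul, add_smul]
  rw [add_comm, mul_comm δ α, mul_comm γ β]

theorem stmt5_general {V : Type*} [AddCommGroup V] [Module ℝ V]
    (g : V →ₗ[ℝ] V →ₗ[ℝ] ℝ) (hsymm : ∀ x y, g x y = g y x)
    (lp lm : V) (hlp : g lp lp = 0) (hlm : g lm lm = 0) (hpm : g lp lm = -2)
    (P : V →ₗ[ℝ] V)
    (D : V →ₗ[ℝ] V →ₗ[ℝ] V) (Pi : V → V → V) (hPi : ∀ u w, Pi u w = P (D u w))
    (hgeop : P (D lp lp) = 0) (hgeom : P (D lm lm) = 0)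
    (hbracket : P (D lp lm) = P (D lm lp))
    (Z : V) (hZ : Z = -((1 / 2 : ℝ) • P (D lp lm))) :
    ∀ α β γ δ : ℝ, ∀ u w : V, u = α • lp + β • lm → w = γ • lp + δ • lm →
      Pi u w = g u w • Z := by
  intro α β γ δ u w hu hw
  subst hu hw hZ
  have hPi_frame :=
    (D.compr₂ P).apply_smul_add_smul_of_diag_eq_zero hgeop hgeom hbracket α β γ δ
  have hg_frame := g.apply_smul_add_smul_of_diag_eq_zero hlp hlm (hsymm lp lm) α β γ δ
  rw [hPi, ← LinearMap.compr₂_apply, hPi_frame, hg_frame, hpm, LinearMap.compr₂_apply]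
  module

/-- if l⁺, l⁻ are lightlike tangent fields spanning TΣ with
g(l⁺,l⁻) = -2 and ∇_{l⁺}l⁺, ∇_{l⁻}l⁻ tangent to Σ (i.e. annihilated by the
normal projection P⊥), and P⊥(∇_{l⁺}l⁻) = P⊥(∇_{l⁻}l⁺) (tangency of the Lie
bracket), then Π(u,w) = g(u,w)Z for all tangent fields u = αl⁺ + βl⁻,
w = γl⁺ + δl⁻, with Z = -(1/2)P⊥(∇_{l⁺}l⁻): Σ is totally umbilic. -/
theorem stmt5 {V : Type*} [AddCommGroup V] [Module ℝ V]
    (g : V →ₗ[ℝ] V →ₗ[ℝ] ℝ) (hsymm : ∀ x y, g x y = g y x)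
    (lp lm : V) (hlp : g lp lp = 0) (hlm : g lm lm = 0) (hpm : g lp lm = -2)
    (P : V →ₗ[ℝ] V)
    (hP : ∀ Y, P Y = Y + (1 / 2 : ℝ) • (g lm Y • lp) + (1 / 2 : ℝ) • (g lp Y • lm))
    (D : V →ₗ[ℝ] V →ₗ[ℝ] V) (Pi : V → V → V) (hPi : ∀ u w, Pi u w = P (D u w))
    (hgeop : P (D lp lp) = 0) (hgeom : P (D lm lm) = 0)
    (hbracket : P (D lp lm) = P (D lm lp))
    (Z : V) (hZ : Z = -((1 / 2 : ℝ) • P (D lp lm))) :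
    ∀ α β γ δ : ℝ, ∀ u w : V, u = α • lp + β • lm → w = γ • lp + δ • lm →
      Pi u w = g u w • Z :=
  stmt5_general g hsymm lp lm hlp hlm hpm P D Pi hPi hgeop hgeom hbracket Z hZ
end

section
/- Centrifugal and Coriolis accelerations both vanish for all worldlines in Σ (all velocities v) if and only if P⊥(∇_{l⁺}l⁺) = 0 and P⊥(∇_{l⁻}l⁻) = 0, i.e., if and only if both lightlike congruences l⁺ and l⁻ on Σ are geodesic. -/
/-!
Write `A = ∇_n n + ∇_τ τ` and `B = ∇_n τ + ∇_τ n`. Since `l± = n ± τ`, bilinearity of `∇` gives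
`∇_{l±} l± = A ± B`, while `a_cen = -γ²v² P⊥A` and `a_Cor = -γ²v P⊥B` with `γ² > 0`. So both
accelerations vanish for every `v ∈ (-1, 1)` iff `P⊥A = P⊥B = 0`, iff `P⊥(A + B) = P⊥(A - B) = 0`.
For the second equivalence, `P⊥` kills `l±`, and a vector `X` with `g(l⁺, X) = 0` satisfies
`P⊥X = X - ½ g(l⁻, X) l⁺`, so `P⊥X = 0` says exactly that `X` is a multiple of `l⁺`.
-/

open Set

section

variable {V : Type*} [AddCommGroup V] [Module ℝ V]

/-- The projection `P⊥` onto the orthogonal complement of the null pair `l, m` normalized by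
`g(l, m) = -2`. -/
noncomputable def screenProj (g : V →ₗ[ℝ] V →ₗ[ℝ] ℝ) (l m : V) : V →ₗ[ℝ] V :=
  LinearMap.id + (1 / 2 : ℝ) • (g m).smulRight l + (1 / 2 : ℝ) • (g l).smulRight m

section screenProj

variable (g : V →ₗ[ℝ] V →ₗ[ℝ] ℝ) (l m : V)

theorem screenProj_apply (Y : V) :
    screenProj g l m Y = Y + (1 / 2 : ℝ) • (g m Y • l) + (1 / 2 : ℝ) • (g l Y • m) := by
  simp [screenProj]

theorem screenProj_comm : screenProj g l m = screenProj g m l := by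
  ext Y
  simp only [screenProj_apply]
  abel

variable {g l m}

theorem screenProj_self (hll : g l l = 0) (hml : g m l = -2) : screenProj g l m l = 0 := by
  rw [screenProj_apply, hll, hml]
  module

theorem screenProj_eq_zero_iff {X : V} (hll : g l l = 0) (hml : g m l = -2) (hX : g l X = 0) :
    screenProj g l m X = 0 ↔ ∃ a : ℝ, X = a • l := by
  constructor
  · intro h
    rw [screenProj_apply, hX] at h
    exact ⟨-(1 / 2 * g m X), by linear_combination (norm := module) h⟩
  · rintro ⟨a, rfl⟩
    rw [map_smul, screenProj_self hll hml, smul_zero]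

end screenProj

section nullFrame

variable {g : V →ₗ[ℝ] V →ₗ[ℝ] ℝ} {n τ : V}

theorem apply_add_add_self_eq_zero (hsymm : ∀ x y, g x y = g y x) (hn : g n n = -1)
    (hτ : g τ τ = 1) (hnτ : g n τ = 0) : g (n + τ) (n + τ) = 0 := by
  simp only [map_add, LinearMap.add_apply, hn, hτ, hnτ, hsymm τ n]
  norm_num

theorem apply_sub_sub_self_eq_zero (hsymm : ∀ x y, g x y = g y x) (hn : g n n = -1)
    (hτ : g τ τ = 1) (hnτ : g n τ = 0) : g (n - τ) (n - τ) = 0 := by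
  simp only [map_sub, LinearMap.sub_apply, hn, hτ, hnτ, hsymm τ n]
  norm_num

theorem apply_sub_add_eq_neg_two (hsymm : ∀ x y, g x y = g y x) (hn : g n n = -1)
    (hτ : g τ τ = 1) (hnτ : g n τ = 0) : g (n - τ) (n + τ) = -2 := by
  simp only [map_add, map_sub, LinearMap.sub_apply, hn, hτ, hnτ, hsymm τ n]
  norm_num

theorem apply_add_sub_eq_neg_two (hsymm : ∀ x y, g x y = g y x) (hn : g n n = -1)
    (hτ : g τ τ = 1) (hnτ : g n τ = 0) : g (n + τ) (n - τ) = -2 := by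
  rw [hsymm, apply_sub_add_eq_neg_two hsymm hn hτ hnτ]

end nullFrame

theorem LinearMap.apply_add_add_self {R M N : Type*} [CommRing R] [AddCommGroup M] [Module R M]
    [AddCommGroup N] [Module R N] (D : M →ₗ[R] M →ₗ[R] N) (x y : M) :
    D (x + y) (x + y) = (D x x + D y y) + (D x y + D y x) := by
  simp only [map_add, LinearMap.add_apply]
  abel

theorem LinearMap.apply_sub_sub_self {R M N : Type*} [CommRing R] [AddCommGroup M] [Module R M]
    [AddCommGroup N] [Module R N] (D : M →ₗ[R] M →ₗ[R] N) (x y : M) :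
    D (x - y) (x - y) = (D x x + D y y) - (D x y + D y x) := by
  simp only [map_sub, LinearMap.sub_apply]
  abel

theorem add_eq_zero_and_sub_eq_zero_iff {K M : Type*} [Field K] [CharZero K] [AddCommGroup M]
    [Module K M] {u w : M} : u + w = 0 ∧ u - w = 0 ↔ u = 0 ∧ w = 0 := by
  constructor
  · rintro ⟨hadd, hsub⟩
    have hu : (2 : K) • u = 0 := by rw [two_smul]; linear_combination (norm := module) hadd + hsub
    have hw : (2 : K) • w = 0 := by rw [two_smul]; linear_combination (norm := module) hadd - hsub
    exact ⟨(smul_eq_zero.mp hu).resolve_left two_ne_zero,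
      (smul_eq_zero.mp hw).resolve_left two_ne_zero⟩
  · rintro ⟨rfl, rfl⟩
    simp

noncomputable def lorentzFactor (v : ℝ) : ℝ := 1 / Real.sqrt (1 - v ^ 2)

theorem lorentzFactor_pos {v : ℝ} (hv : v ∈ Ioo (-1 : ℝ) 1) : 0 < lorentzFactor v := by
  have : 0 < 1 - v ^ 2 := by nlinarith [hv.1, hv.2]
  unfold lorentzFactor
  positivity

theorem inertialAccel_eq_zero_iff (u w : V) :
    (∀ v ∈ Ioo (-1 : ℝ) 1,
      -((lorentzFactor v ^ 2 * v ^ 2) • u) = 0 ∧ -((lorentzFactor v ^ 2 * v) • w) = 0) ↔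
      u = 0 ∧ w = 0 := by
  constructor
  · intro h
    have hv : (1 / 2 : ℝ) ∈ Ioo (-1 : ℝ) 1 := by norm_num
    have hγ := (lorentzFactor_pos hv).ne'
    obtain ⟨hu, hw⟩ := h _ hv
    rw [neg_eq_zero, smul_eq_zero] at hu hw
    exact ⟨hu.resolve_left (by positivity), hw.resolve_left (by positivity)⟩
  · rintro ⟨rfl, rfl⟩ v -
    simp

end

/-- the centrifugal and Coriolis accelerations vanish for all
worldlines in Σ (all velocities v ∈ (-1,1)) iff P⊥(∇_{l⁺}l⁺) = 0 and
P⊥(∇_{l⁻}l⁻) = 0, i.e. iff both lightlike congruences are geodesic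
(∇_{l±}l± a multiple of l±). -/
theorem stmt8 {V : Type*} [AddCommGroup V] [Module ℝ V]
    (g : V →ₗ[ℝ] V →ₗ[ℝ] ℝ) (hsymm : ∀ x y, g x y = g y x)
    (n τ : V) (hn : g n n = -1) (hτ : g τ τ = 1) (hnτ : g n τ = 0)
    (lp lm : V) (hlp : lp = n + τ) (hlm : lm = n - τ)
    (P : V →ₗ[ℝ] V)
    (hP : ∀ Y, P Y = Y + (1 / 2 : ℝ) • (g lm Y • lp) + (1 / 2 : ℝ) • (g lp Y • lm))
    (D : V →ₗ[ℝ] V →ₗ[ℝ] V)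
    -- metric compatibility along the lightlike generators
    (hcp : g lp (D lp lp) = 0) (hcm : g lm (D lm lm) = 0)
    -- centrifugal and Coriolis acceleration as functions of the velocity v
    (acen aCor : ℝ → V)
    (hacen : ∀ v : ℝ, acen v =
      -(((1 / Real.sqrt (1 - v ^ 2)) ^ 2 * v ^ 2) • P (D n n + D τ τ)))
    (haCor : ∀ v : ℝ, aCor v =
      -(((1 / Real.sqrt (1 - v ^ 2)) ^ 2 * v) • P (D n τ + D τ n))) :
    ((∀ v ∈ Set.Ioo (-1 : ℝ) 1, acen v = 0 ∧ aCor v = 0) ↔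
      (P (D lp lp) = 0 ∧ P (D lm lm) = 0)) ∧
    ((P (D lp lp) = 0 ∧ P (D lm lm) = 0) ↔
      ((∃ a : ℝ, D lp lp = a • lp) ∧ (∃ b : ℝ, D lm lm = b • lm))) := by
  obtain rfl : P = screenProj g lp lm :=
    LinearMap.ext fun Y => (hP Y).trans (screenProj_apply ..).symm
  subst hlp hlm
  refine ⟨?_, and_congr ?_ ?_⟩
  · simp only [hacen, haCor]
    refine (inertialAccel_eq_zero_iff _ _).trans ?_
    rw [D.apply_add_add_self, D.apply_sub_sub_self, map_add _ (D n n + D τ τ), map_sub,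
      add_eq_zero_and_sub_eq_zero_iff (K := ℝ)]
  · exact screenProj_eq_zero_iff (apply_add_add_self_eq_zero hsymm hn hτ hnτ)
      (apply_sub_add_eq_neg_two hsymm hn hτ hnτ) hcp
  · rw [screenProj_comm]
    exact screenProj_eq_zero_iff (apply_sub_sub_self_eq_zero hsymm hn hτ hnτ)
      (apply_add_sub_eq_neg_two hsymm hn hτ hnτ) hcm
end

section
/- In 3-dimensional Minkowski space with metric dx² + dy² - dt², a hyperbolic paraboloid (a doubly ruled quadric of the form t = xy after an affine change of coordinates) cannot have both of its rulings consist of lightlike lines. -/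
/-!
The directions `L (1, 0, y)` of one ruling are the points of the affine line `a + y • c` with
`a = L e₀`, `c = L e₂`. If all of them are null, polarization shows that `a` and `c` are null and
orthogonal, so they span a totally isotropic plane. For the Lorentzian form this forces `a` and `c`
to be proportional (their Euclidean cross product vanishes), contradicting injectivity of `L`.
-/

open Matrix

namespace QuadraticMap

variable {R M : Type*} [Field R] [NeZero (2 : R)] [AddCommGroup M] [Module R M]

theorem isotropic_of_forall_map_add_smul_eq_zero (Q : QuadraticForm R M) {a c : M}
    (h : ∀ y : R, Q (a + y • c) = 0) : Q a = 0 ∧ Q c = 0 ∧ polar Q a c = 0 := by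
  have h0 := h 0
  have hp := h 1
  have hm := h (-1)
  rw [zero_smul, add_zero] at h0
  rw [one_smul, QuadraticMap.map_add Q] at hp
  rw [neg_one_smul, QuadraticMap.map_add Q, QuadraticMap.map_neg, polar_neg_right] at hm
  have hc : (2 : R) * Q c = 0 := by linear_combination hp + hm - 2 * h0
  have hc := (mul_eq_zero.mp hc).resolve_left two_ne_zero
  exact ⟨h0, hc, by linear_combination hp - h0 - hc⟩

end QuadraticMap

def minkowskiForm : QuadraticForm ℝ (Fin 3 → ℝ) := QuadraticMap.weightedSumSquares ℝ ![1, 1, -1]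

theorem minkowskiForm_apply (v : Fin 3 → ℝ) : minkowskiForm v = v 0 ^ 2 + v 1 ^ 2 - v 2 ^ 2 := by
  simp only [minkowskiForm, QuadraticMap.weightedSumSquares_apply, Fin.sum_univ_three, cons_val_zero,
    cons_val_one, cons_val, zsmul_eq_mul, Int.cast_one, Int.cast_neg]
  ring

theorem polar_minkowskiForm (a c : Fin 3 → ℝ) :
    QuadraticMap.polar minkowskiForm a c = 2 * (a 0 * c 0 + a 1 * c 1 - a 2 * c 2) := by
  simp only [QuadraticMap.polar, minkowskiForm_apply, Pi.add_apply]
  ring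

theorem cross_eq_zero_of_minkowski_isotropic {a c : Fin 3 → ℝ} (ha : minkowskiForm a = 0)
    (hc : minkowskiForm c = 0) (hac : QuadraticMap.polar minkowskiForm a c = 0) : a ⨯₃ c = 0 := by
  rw [minkowskiForm_apply] at ha hc
  rw [polar_minkowskiForm] at hac
  -- `(a₀c₁ - a₁c₀)² = (c₀² + c₁²) q(a) + a₂² q(c) - (a₀c₀ + a₁c₁ + a₂c₂)(a₀c₀ + a₁c₁ - a₂c₂)`
  have m01 : a 0 * c 1 - a 1 * c 0 = 0 := pow_eq_zero_iff two_ne_zero |>.mp <| by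
    linear_combination (c 0 ^ 2 + c 1 ^ 2) * ha + a 2 ^ 2 * hc -
      (a 0 * c 0 + a 1 * c 1 + a 2 * c 2) / 2 * hac
  have m20 : a 2 * c 0 - a 0 * c 2 = 0 := pow_eq_zero_iff two_ne_zero |>.mp <| by
    linear_combination (a 0 * c 1 - a 1 * c 0) * m01 - a 0 ^ 2 * hc +
      a 0 * c 0 * hac - c 0 ^ 2 * ha
  have m12 : a 1 * c 2 - a 2 * c 1 = 0 := pow_eq_zero_iff two_ne_zero |>.mp <| by
    linear_combination (a 0 * c 1 - a 1 * c 0) * m01 - a 1 ^ 2 * hc +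
      a 1 * c 1 * hac - c 1 ^ 2 * ha
  rw [cross_apply, m12, m20, m01]
  simp

/-- in 3-dimensional Minkowski space (form q(v) = v₁² + v₂² - v₃²),
a hyperbolic paraboloid — the image of {(x,y,xy)} under an affine bijection,
whose two rulings have direction vectors obtained from (1,0,y) and (0,1,x) —
cannot have both of its rulings consist of lightlike lines: there is no
bijective linear map L such that L(1,0,y) and L(0,1,x) are q-null for all x, y. -/
theorem stmt15
    (q : (Fin 3 → ℝ) → ℝ) (hq : ∀ v, q v = v 0 ^ 2 + v 1 ^ 2 - v 2 ^ 2) :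
    ¬ ∃ L : (Fin 3 → ℝ) →ₗ[ℝ] (Fin 3 → ℝ), Function.Bijective L ∧
      (∀ y : ℝ, q (L ![1, 0, y]) = 0) ∧ (∀ x : ℝ, q (L ![0, 1, x]) = 0) := by
  rintro ⟨L, ⟨hinj, -⟩, hnull, -⟩
  have hL : ∀ s t : ℝ, L ![s, 0, t] = s • L ![1, 0, 0] + t • L ![0, 0, 1] := by
    intro s t
    rw [← map_smul, ← map_smul, ← map_add]
    congr 1
    ext i; fin_cases i <;> simp
  have hline : ∀ y : ℝ, minkowskiForm (L ![1, 0, 0] + y • L ![0, 0, 1]) = 0 := fun y => by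
    rw [minkowskiForm_apply, ← hq, ← one_smul ℝ (L ![1, 0, 0]), ← hL]
    exact hnull y
  have hind : LinearIndependent ℝ ![L ![1, 0, 0], L ![0, 0, 1]] := by
    refine LinearIndependent.pair_iff.mpr fun s t hst => ?_
    rw [← hL, ← map_zero L] at hst
    have := hinj hst
    exact ⟨by simpa using congrFun this 0, by simpa using congrFun this 2⟩
  obtain ⟨ha, hc, hac⟩ := QuadraticMap.isotropic_of_forall_map_add_smul_eq_zero _ hline
  exact crossProduct_ne_zero_iff_linearIndependent.mpr hind
    (cross_eq_zero_of_minkowski_isotropic ha hc hac)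
end

section
/- In the Gödel metric g = -dt² + dx² - (1/2)e^{2√2 ω₀ x}dy² + dz² - 2e^{√2 ω₀ x}dt dy, the vector fields L± = ∂_t ± ∂_z are lightlike, commute ([L⁺,L⁻] = 0), and satisfy ∇_{L±}L± = 0 for the Levi-Civita connection; hence the surfaces {x = const, y = const} are timelike photon 2-surfaces. -/
/-!
The metric coefficients depend on `x` alone and `L±` have no `∂_x` component, so every
component `g(L±, ∂_i)` is invariant along `L±`; and `g(L±, L±)` vanishes identically.
Hence both terms of the Koszul expression for `g(∇_{L±} L±, ∂_i)` vanish, while `L±` commute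
because they are constant.
-/

theorem fderiv_apply_eq_zero_of_forall_add_smul {𝕜 E F : Type*} [NontriviallyNormedField 𝕜]
    [NormedAddCommGroup E] [NormedSpace 𝕜 E] [NormedAddCommGroup F] [NormedSpace 𝕜 F]
    {f : E → F} {v : E} (hf : ∀ q (t : 𝕜), f (q + t • v) = f q) (p : E) :
    fderiv 𝕜 f p v = 0 := by
  by_cases hdiff : DifferentiableAt 𝕜 f p
  · have hline : (fun t : 𝕜 => f (p + t • v)) = fun _ => f p := funext (hf p)
    rw [← hdiff.lineDeriv_eq_fderiv, lineDeriv, hline, deriv_const]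
  · simp [fderiv_zero_of_not_differentiableAt hdiff]

theorem koszul_self_eq_zero {E : Type*} [NormedAddCommGroup E] [NormedSpace ℝ E]
    (G : E → E → E → ℝ) (L : E) (c : ℝ) (hinv : ∀ q (t : ℝ), G (q + t • L) = G q)
    (hnorm : ∀ q, G q L L = c) (p w : E) :
    fderiv ℝ (fun q => G q L w) p L - (1 / 2) * fderiv ℝ (fun q => G q L L) p w = 0 := by
  have hconst : (fun q => G q L L) = fun _ => c := funext hnorm
  rw [fderiv_apply_eq_zero_of_forall_add_smul (fun q t => by rw [hinv]), hconst,
    fderiv_const_apply]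
  simp

noncomputable def godelMetric (ω₀ : ℝ) (p v w : Fin 4 → ℝ) : ℝ :=
  -(v 0 * w 0) + v 1 * w 1 - (1 / 2) * Real.exp (2 * Real.sqrt 2 * ω₀ * p 1) * v 2 * w 2
    + v 3 * w 3 - Real.exp (Real.sqrt 2 * ω₀ * p 1) * (v 0 * w 2 + v 2 * w 0)

theorem godelMetric_add_smul (ω₀ : ℝ) {L : Fin 4 → ℝ} (hL : L 1 = 0) (q : Fin 4 → ℝ) (t : ℝ) :
    godelMetric ω₀ (q + t • L) = godelMetric ω₀ q := by
  ext v w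
  simp [godelMetric, hL]

theorem godelMetric_null (ω₀ : ℝ) (s : ℝ) (hs : s ^ 2 = 1) (p : Fin 4 → ℝ) :
    godelMetric ω₀ p ![1, 0, 0, s] ![1, 0, 0, s] = 0 := by
  simp [godelMetric, ← sq, hs]

theorem stmt18_general (ω₀ : ℝ)
    (G : (Fin 4 → ℝ) → (Fin 4 → ℝ) → (Fin 4 → ℝ) → ℝ)
    (hG : ∀ p v w, G p v w = -(v 0 * w 0) + v 1 * w 1
      - (1 / 2) * Real.exp (2 * Real.sqrt 2 * ω₀ * p 1) * v 2 * w 2 + v 3 * w 3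
      - Real.exp (Real.sqrt 2 * ω₀ * p 1) * (v 0 * w 2 + v 2 * w 0))
    (lp lm : Fin 4 → ℝ) (hlp : lp = ![1, 0, 0, 1]) (hlm : lm = ![1, 0, 0, -1]) :
    -- L± are lightlike
    (∀ p, G p lp lp = 0 ∧ G p lm lm = 0) ∧
    -- [L⁺,L⁻] = 0 (as constant vector fields)
    (∀ p : Fin 4 → ℝ,
      fderiv ℝ (fun _ : Fin 4 → ℝ => lm) p lp
        - fderiv ℝ (fun _ : Fin 4 → ℝ => lp) p lm = 0) ∧
    -- ∇_{L±}L± = 0 via the Koszul formula with the coordinate fields ∂_i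
    (∀ p : Fin 4 → ℝ, ∀ i : Fin 4,
      fderiv ℝ (fun q => G q lp (Pi.single i 1)) p lp
          - (1 / 2) * fderiv ℝ (fun q => G q lp lp) p (Pi.single i 1) = 0 ∧
      fderiv ℝ (fun q => G q lm (Pi.single i 1)) p lm
          - (1 / 2) * fderiv ℝ (fun q => G q lm lm) p (Pi.single i 1) = 0) := by
  have hGodel : G = godelMetric ω₀ := by
    ext p v w
    exact hG p v w
  subst hGodel hlp hlm
  have hplus := godelMetric_null ω₀ 1 (by norm_num)
  have hminus := godelMetric_null ω₀ (-1) (by norm_num)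
  refine ⟨fun p => ⟨hplus p, hminus p⟩, fun p => by simp, fun p i => ⟨?_, ?_⟩⟩
  · exact koszul_self_eq_zero _ _ 0 (godelMetric_add_smul ω₀ rfl) hplus p _
  · exact koszul_self_eq_zero _ _ 0 (godelMetric_add_smul ω₀ rfl) hminus p _

/-- in the Gödel metric
g = -dt² + dx² - (1/2)e^{2√2ω₀x}dy² + dz² - 2e^{√2ω₀x}dt dy (coordinates
(t,x,y,z)), the constant vector fields L± = ∂_t ± ∂_z are lightlike, commute,
and satisfy ∇_{L±}L± = 0, the latter expressed by the Koszul formula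
g(∇_L L, ∂_i) = L g(L,∂_i) - (1/2)∂_i g(L,L) = 0 for all coordinate fields ∂_i;
hence the surfaces {x = const, y = const} are timelike photon 2-surfaces. -/
theorem stmt18 (ω₀ : ℝ) (hω : 0 < ω₀)
    (G : (Fin 4 → ℝ) → (Fin 4 → ℝ) → (Fin 4 → ℝ) → ℝ)
    (hG : ∀ p v w, G p v w = -(v 0 * w 0) + v 1 * w 1
      - (1 / 2) * Real.exp (2 * Real.sqrt 2 * ω₀ * p 1) * v 2 * w 2 + v 3 * w 3
      - Real.exp (Real.sqrt 2 * ω₀ * p 1) * (v 0 * w 2 + v 2 * w 0))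
    (lp lm : Fin 4 → ℝ) (hlp : lp = ![1, 0, 0, 1]) (hlm : lm = ![1, 0, 0, -1]) :
    -- L± are lightlike
    (∀ p, G p lp lp = 0 ∧ G p lm lm = 0) ∧
    -- [L⁺,L⁻] = 0 (as constant vector fields)
    (∀ p : Fin 4 → ℝ,
      fderiv ℝ (fun _ : Fin 4 → ℝ => lm) p lp
        - fderiv ℝ (fun _ : Fin 4 → ℝ => lp) p lm = 0) ∧
    -- ∇_{L±}L± = 0 via the Koszul formula with the coordinate fields ∂_i
    (∀ p : Fin 4 → ℝ, ∀ i : Fin 4,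
      fderiv ℝ (fun q => G q lp (Pi.single i 1)) p lp
          - (1 / 2) * fderiv ℝ (fun q => G q lp lp) p (Pi.single i 1) = 0 ∧
      fderiv ℝ (fun q => G q lm (Pi.single i 1)) p lm
          - (1 / 2) * fderiv ℝ (fun q => G q lm lm) p (Pi.single i 1) = 0) :=
  stmt18_general ω₀ G hG lp lm hlp hlm
end
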